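/- Consider the ODE model: (1/N) Σⱼ (I + m Φ(Xⱼ,y)ᵀΦ(Xⱼ,y)) ÿ = (1/N) Σⱼ [F₀(y) + Φ(Xⱼ,y)ᵀ(F₁(Xⱼ) − m Ω(Xⱼ,y)[ẏ,ẏ])] and Ẋᵢ = Φ(Xᵢ,y) ẏ for 1 ≤ i ≤ N, where F₀ = −∇W₀, F₁ = −∇W₁ with W₀ ∈ C¹(ℝ^{n_y}), W₁ ∈ C¹(ℝ^{n_x}), Φ C¹, and Ω defined from Φ as Ω[v,w] = D_XΦ[v, Φw] + D_yΦ[v,w]. For any solution with y ∈ C²([0,T]) and each Xᵢ ∈ C¹([0,T]), the total energy E(t) = ½‖ẏ‖² + W₀(y) + (1/N) Σᵢ (½ m ‖Ẋᵢ‖² + W₁(Xᵢ)) is constant in t. -/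

import Mathlib

open Set
open scoped RealInnerProductSpace

abbrev Euc (n : ℕ) := EuclideanSpace ℝ (Fin n)

/-!
On `[0, T]` the particle velocities are `Ẋᵢ = Φ(Xᵢ, y) ẏ`, so the energy is a function of
`(X, y, ẏ)` alone. Differentiating, the chain rule gives `Ẍᵢ = Φᵢ ÿ + Ωᵢ[ẏ, ẏ]`, where
`Ωᵢ[ẏ, ẏ] = (DΦ(Xᵢ, y)(Φᵢ ẏ, ẏ)) ẏ` is exactly the term in the ODE, and `F₀ = -∇W₀`,
`F₁ = -∇W₁` turn the potential terms into `-⟪F₀, ẏ⟫` and `-⟪F₁(Xᵢ), Φᵢ ẏ⟫`. Moving every `Φᵢ`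
to the other side of the inner product via the adjoint, `dE/dt` is the inner product of `ẏ`
with the difference of the two sides of the ODE, hence zero, and `E` is constant.
-/

section

variable {E : Type*} [NormedAddCommGroup E] [InnerProductSpace ℝ E]

theorem HasGradientAt.comp_hasDerivAt [CompleteSpace E] {W : E → ℝ} {g : E} {γ : ℝ → E}
    {γ' : E} {t : ℝ} (hW : HasGradientAt W g (γ t)) (hγ : HasDerivAt γ γ' t) :
    HasDerivAt (fun s => W (γ s)) ⟪g, γ'⟫ t :=
  (hW.hasFDerivAt.comp_hasDerivAt t hγ).congr_deriv (by simp)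

theorem HasDerivAt.const_div_two_mul_norm_sq {f : ℝ → E} {f' : E} {t : ℝ} (c : ℝ)
    (hf : HasDerivAt f f' t) :
    HasDerivAt (fun s => c / 2 * ‖f s‖ ^ 2) (c * ⟪f', f t⟫) t :=
  (hf.norm_sq.const_mul (c / 2)).congr_deriv (by rw [real_inner_comm]; ring)

end

section

variable {Ex Ey : Type*} [NormedAddCommGroup Ex] [InnerProductSpace ℝ Ex] [CompleteSpace Ex]
  [NormedAddCommGroup Ey] [InnerProductSpace ℝ Ey] [CompleteSpace Ey] {ι : Type*} [Fintype ι]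

/-- The energy of the statement with `Ẋᵢ` replaced by `Φ(Xᵢ, y) ẏ`, and particle weight `c`
in place of `1 / N`. -/
noncomputable def constrainedEnergy (c m : ℝ) (W₀ : Ey → ℝ) (W₁ : Ex → ℝ)
    (Φ : Ex × Ey → Ey →L[ℝ] Ex) (X : ι → ℝ → Ex) (y y' : ℝ → Ey) (t : ℝ) : ℝ :=
  1 / 2 * ‖y' t‖ ^ 2 + W₀ (y t) + c * ∑ i, (m / 2 * ‖Φ (X i t, y t) (y' t)‖ ^ 2 + W₁ (X i t))

theorem hasDerivAt_constrainedEnergy (c m : ℝ) {W₀ : Ey → ℝ} {W₁ : Ex → ℝ} {F₀ : Ey → Ey}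
    {F₁ : Ex → Ex} {Φ : Ex × Ey → Ey →L[ℝ] Ex} {DΦ : Ex × Ey → Ex × Ey →L[ℝ] Ey →L[ℝ] Ex}
    {X : ι → ℝ → Ex} {X' : ι → Ex} {y y' : ℝ → Ey} {y'' : Ey} {t : ℝ}
    (hW₀ : HasGradientAt W₀ (-F₀ (y t)) (y t))
    (hW₁ : ∀ i, HasGradientAt W₁ (-F₁ (X i t)) (X i t))
    (hΦ : ∀ i, HasFDerivAt Φ (DΦ (X i t, y t)) (X i t, y t))
    (hX : ∀ i, HasDerivAt (X i) (X' i) t) (hy : HasDerivAt y (y' t) t)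
    (hy' : HasDerivAt y' y'' t) :
    HasDerivAt (constrainedEnergy c m W₀ W₁ Φ X y y')
      (⟪y'', y' t⟫ - ⟪F₀ (y t), y' t⟫ + c * ∑ i,
        (m * ⟪DΦ (X i t, y t) (X' i, y' t) (y' t) + Φ (X i t, y t) y'', Φ (X i t, y t) (y' t)⟫
          - ⟪F₁ (X i t), X' i⟫)) t := by
  have hvel : ∀ i, HasDerivAt (fun s => Φ (X i s, y s) (y' s))
      (DΦ (X i t, y t) (X' i, y' t) (y' t) + Φ (X i t, y t) y'') t := fun i => by
    have hpath : HasDerivAt (fun s => Φ (X i s, y s)) (DΦ (X i t, y t) (X' i, y' t)) t :=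
      (hΦ i).comp_hasDerivAt t ((hX i).prodMk hy)
    exact hpath.clm_apply hy'
  have hparticle : ∀ i, HasDerivAt (fun s => m / 2 * ‖Φ (X i s, y s) (y' s)‖ ^ 2 + W₁ (X i s))
      (m * ⟪DΦ (X i t, y t) (X' i, y' t) (y' t) + Φ (X i t, y t) y'', Φ (X i t, y t) (y' t)⟫
        - ⟪F₁ (X i t), X' i⟫) t := fun i =>
    (((hvel i).const_div_two_mul_norm_sq m).add ((hW₁ i).comp_hasDerivAt (hX i))).congr_deriv
      (by rw [inner_neg_left, sub_eq_add_neg])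
  have hmacro := (hy'.const_div_two_mul_norm_sq 1).add (hW₀.comp_hasDerivAt hy)
  exact (hmacro.add ((HasDerivAt.fun_sum fun i _ => hparticle i).const_mul c)).congr_deriv
    (by rw [inner_neg_left, one_mul, sub_eq_add_neg])

theorem power_eq_zero_of_ode {c m : ℝ} {A : ι → Ey →L[ℝ] Ex} {a v f₀ : Ey} {f₁ ω : ι → Ex}
    (h : a + (m * c) • ∑ j, (A j).adjoint (A j a) =
      f₀ + c • ∑ j, (A j).adjoint (f₁ j - m • ω j)) :
    ⟪a, v⟫ - ⟪f₀, v⟫ + c * ∑ i, (m * ⟪ω i + A i a, A i v⟫ - ⟪f₁ i, A i v⟫) = 0 := by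
  have hv := congrArg (⟪·, v⟫) h
  simp only [inner_add_left, inner_sub_left, real_inner_smul_left, sum_inner,
    ContinuousLinearMap.adjoint_inner_left] at hv
  linear_combination (norm := skip) hv
  simp only [inner_add_left, mul_add, mul_sub, Finset.mul_sum, Finset.sum_add_distrib,
    Finset.sum_sub_distrib]
  ring_nf

end

theorem stmt_14_general {nx ny N : ℕ}
    (m : ℝ)
    (W₀ : Euc ny → ℝ) (W₁ : Euc nx → ℝ)
    (F₀ : Euc ny → Euc ny) (F₁ : Euc nx → Euc nx)
    (hW₀ : ∀ y, HasGradientAt W₀ (-(F₀ y)) y)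
    (hW₁ : ∀ X, HasGradientAt W₁ (-(F₁ X)) X)
    (Φ : Euc nx × Euc ny → (Euc ny →L[ℝ] Euc nx))
    (DΦ : Euc nx × Euc ny → (Euc nx × Euc ny →L[ℝ] (Euc ny →L[ℝ] Euc nx)))
    (hΦ : ∀ p, HasFDerivAt Φ (DΦ p) p)
    (T : ℝ)
    (X : Fin N → ℝ → Euc nx) (X' : Fin N → ℝ → Euc nx)
    (y : ℝ → Euc ny) (y' y'' : ℝ → Euc ny)
    (hX : ∀ i, ∀ t ∈ Icc 0 T, HasDerivAt (X i) (X' i t) t)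
    (hy : ∀ t ∈ Icc 0 T, HasDerivAt y (y' t) t)
    (hy' : ∀ t ∈ Icc 0 T, HasDerivAt y' (y'' t) t)
    (hconstr : ∀ i, ∀ t ∈ Icc 0 T, X' i t = Φ (X i t, y t) (y' t))
    (hODE : ∀ t ∈ Icc 0 T,
      y'' t + ((m / N : ℝ) • ∑ j : Fin N,
          (ContinuousLinearMap.adjoint (Φ (X j t, y t)))
            (Φ (X j t, y t) (y'' t))) =
        F₀ (y t) + ((N : ℝ)⁻¹ • ∑ j : Fin N,
          (ContinuousLinearMap.adjoint (Φ (X j t, y t)))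
            (F₁ (X j t) - m • (DΦ (X j t, y t)
              (Φ (X j t, y t) (y' t), y' t)) (y' t)))) :
    let E : ℝ → ℝ := fun t =>
      (1 / 2 : ℝ) * ‖y' t‖ ^ 2 + W₀ (y t) +
        (N : ℝ)⁻¹ * ∑ i : Fin N, (m / 2 * ‖X' i t‖ ^ 2 + W₁ (X i t))
    ∀ t ∈ Icc 0 T, E t = E 0 := by
  intro E t ht
  set G := constrainedEnergy (N : ℝ)⁻¹ m W₀ W₁ Φ X y y'
  have hEG : ∀ s ∈ Icc 0 T, E s = G s := fun s hs => by
    simp only [E, G, constrainedEnergy, hconstr _ s hs]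
  have hG : ∀ s ∈ Icc 0 T, HasDerivAt G 0 s := fun s hs => by
    refine (hasDerivAt_constrainedEnergy _ m (hW₀ _) (fun i => hW₁ _) (fun i => hΦ _)
      (fun i => hX i s hs) (hy s hs) (hy' s hs)).congr_deriv ?_
    simp only [hconstr _ s hs]
    exact power_eq_zero_of_ode (by simpa only [div_eq_mul_inv] using hODE s hs)
  rw [hEG t ht, hEG 0 ⟨le_rfl, ht.1.trans ht.2⟩]
  exact constant_of_has_deriv_right_zero (fun s hs => (hG s hs).continuousAt.continuousWithinAt)
    (fun s hs => (hG s (Ico_subset_Icc_self hs)).hasDerivWithinAt) t ht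

/-- conservation of the total energy
`E = ½‖ẏ‖² + W₀(y) + (1/N) Σᵢ (½ m ‖Ẋᵢ‖² + W₁(Xᵢ))` along solutions of the ODE model
`(1/N)Σⱼ(I + mΦⱼᵀΦⱼ) ÿ = (1/N)Σⱼ[F₀(y) + Φⱼᵀ(F₁(Xⱼ) − mΩⱼ[ẏ,ẏ])]`,
`Ẋᵢ = Φ(Xᵢ,y) ẏ`, with `F₀ = −∇W₀`, `F₁ = −∇W₁` and
`Ω(X,y)[v,w] = D_XΦ[v,Φw] + D_yΦ[v,w] = (DΦ(X,y)(Φ(X,y)w, w)) v`. -/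
theorem stmt_14 {nx ny N : ℕ} (hN : 0 < N)
    (m : ℝ) (hm : 0 < m)
    (W₀ : Euc ny → ℝ) (W₁ : Euc nx → ℝ)
    (F₀ : Euc ny → Euc ny) (F₁ : Euc nx → Euc nx)
    (hW₀ : ∀ y, HasGradientAt W₀ (-(F₀ y)) y)
    (hW₁ : ∀ X, HasGradientAt W₁ (-(F₁ X)) X)
    (Φ : Euc nx × Euc ny → (Euc ny →L[ℝ] Euc nx))
    (DΦ : Euc nx × Euc ny → (Euc nx × Euc ny →L[ℝ] (Euc ny →L[ℝ] Euc nx)))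
    (hΦ : ∀ p, HasFDerivAt Φ (DΦ p) p)
    (T : ℝ) (hT : 0 ≤ T)
    (X : Fin N → ℝ → Euc nx) (X' : Fin N → ℝ → Euc nx)
    (y : ℝ → Euc ny) (y' y'' : ℝ → Euc ny)
    (hX : ∀ i, ∀ t ∈ Icc 0 T, HasDerivAt (X i) (X' i t) t)
    (hy : ∀ t ∈ Icc 0 T, HasDerivAt y (y' t) t)
    (hy' : ∀ t ∈ Icc 0 T, HasDerivAt y' (y'' t) t)
    (hconstr : ∀ i, ∀ t ∈ Icc 0 T, X' i t = Φ (X i t, y t) (y' t))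
    (hODE : ∀ t ∈ Icc 0 T,
      y'' t + ((m / N : ℝ) • ∑ j : Fin N,
          (ContinuousLinearMap.adjoint (Φ (X j t, y t)))
            (Φ (X j t, y t) (y'' t))) =
        F₀ (y t) + ((N : ℝ)⁻¹ • ∑ j : Fin N,
          (ContinuousLinearMap.adjoint (Φ (X j t, y t)))
            (F₁ (X j t) - m • (DΦ (X j t, y t)
              (Φ (X j t, y t) (y' t), y' t)) (y' t)))) :
    let E : ℝ → ℝ := fun t =>
      (1 / 2 : ℝ) * ‖y' t‖ ^ 2 + W₀ (y t) +
        (N : ℝ)⁻¹ * ∑ i : Fin N, (m / 2 * ‖X' i t‖ ^ 2 + W₁ (X i t))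
    ∀ t ∈ Icc 0 T, E t = E 0 :=
  stmt_14_general m W₀ W₁ F₀ F₁ hW₀ hW₁ Φ DΦ hΦ T X X' y y' y'' hX hy hy' hconstr hODE
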